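/- arXiv:1510.02197 — 6 statements merged into one kernel-verified Lean document; each statement's English description precedes it below -/
import Mathlib

section
/- Let G be a cycle graph with n edges e₁,...,e_n. Then every cost matrix Q for the QMSTP on G is linearizable, and a linearization C is given by c(e) = q(e,e) + Σ_{i≠e} (q(i,e) + q(e,i)) − (Σ_{i} Σ_{j≠i} q(i,j))/(n−1). -/
/-!
A spanning tree of the `n`-cycle has `n - 1` of its `n` edges, so it is `E ∖ {e}` for a single
edge `e`. With `r f`, `c f` the row and column sums of `Q` over `E`, `S` its total and `D` its
off-diagonal total, the proposed cost is `r f + c f - q(f,f) - D/(n-1)`. Summed over the `n - 1`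
edges `f ≠ e`, the correction terms add up to exactly `D = S - ∑ q(f,f)`, leaving
`S - r e - c e + q(e,e)`, which is `Q(E ∖ {e})` by inclusion–exclusion.
-/

open Finset

/-- `T` (a finite set of edges) is a spanning tree of the simple graph `G`. -/
def IsSpanningTree {V : Type*} (G : SimpleGraph V) (T : Finset (Sym2 V)) : Prop :=
  ↑T ⊆ G.edgeSet ∧ (SimpleGraph.fromEdgeSet (↑T : Set (Sym2 V))).IsTree

/-- Quadratic cost of a spanning tree: `Q(T) = ∑_{e∈T} ∑_{f∈T} q(e,f)`. -/
noncomputable def treeCost {V : Type*} (Q : Sym2 V → Sym2 V → ℝ) (T : Finset (Sym2 V)) : ℝ :=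
  ∑ e ∈ T, ∑ f ∈ T, Q e f

/-- `c` is a linearization of `Q` on `G`. -/
def IsLinearization {V : Type*} (G : SimpleGraph V) (Q : Sym2 V → Sym2 V → ℝ)
    (c : Sym2 V → ℝ) : Prop :=
  ∀ T : Finset (Sym2 V), IsSpanningTree G T → treeCost Q T = ∑ e ∈ T, c e

/-- `Q` is linearizable on `G`. -/
def Linearizable {V : Type*} (G : SimpleGraph V) (Q : Sym2 V → Sym2 V → ℝ) : Prop :=
  ∃ c : Sym2 V → ℝ, IsLinearization G Q c

section Algebra

variable {V : Type*} [DecidableEq (Sym2 V)] (Q : Sym2 V → Sym2 V → ℝ) (E : Finset (Sym2 V))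

lemma treeCost_erase {e : Sym2 V} (he : e ∈ E) :
    treeCost Q (E.erase e) = treeCost Q E - ∑ f ∈ E, Q e f - ∑ f ∈ E, Q f e + Q e e := by
  have hrow : ∀ f, ∑ g ∈ E.erase e, Q f g = ∑ g ∈ E, Q f g - Q f e :=
    fun f => sum_erase_eq_sub he
  rw [treeCost, sum_congr rfl fun f _ => hrow f, sum_erase_eq_sub he, sum_sub_distrib, treeCost]
  ring

lemma sum_sum_erase_eq_treeCost_sub :
    ∑ i ∈ E, ∑ j ∈ E.erase i, Q i j = treeCost Q E - ∑ i ∈ E, Q i i := by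
  rw [treeCost, ← sum_sub_distrib]
  exact sum_congr rfl fun i hi => sum_erase_eq_sub hi

lemma diag_add_sum_erase {f : Sym2 V} (hf : f ∈ E) :
    Q f f + ∑ i ∈ E.erase f, (Q i f + Q f i) = ∑ i ∈ E, Q f i + ∑ i ∈ E, Q i f - Q f f := by
  rw [sum_erase_eq_sub hf, sum_add_distrib]
  ring

theorem treeCost_erase_eq_sum {e : Sym2 V} (he : e ∈ E) :
    treeCost Q (E.erase e) = ∑ f ∈ E.erase e, (Q f f + ∑ i ∈ E.erase f, (Q i f + Q f i)
      - (∑ i ∈ E, ∑ j ∈ E.erase i, Q i j) / ((#E : ℝ) - 1)) := by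
  rcases eq_or_ne #E 1 with hE | hE
  · have : E.erase e = ∅ := by rw [← card_eq_zero, card_erase_of_mem he, hE]
    simp [this, treeCost]
  have hE' : (#E : ℝ) - 1 ≠ 0 := sub_ne_zero.2 (by exact_mod_cast hE)
  rw [sum_sub_distrib, sum_const, card_erase_of_mem he, nsmul_eq_mul,
    Nat.cast_pred (card_pos.2 ⟨e, he⟩), mul_div_cancel₀ _ hE',
    sum_congr rfl fun f hf => diag_add_sum_erase Q E (mem_of_mem_erase hf),
    sum_erase_eq_sub he, sum_sub_distrib, sum_add_distrib, sum_comm (f := fun f i => Q i f),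
    sum_sum_erase_eq_treeCost_sub, treeCost_erase Q E he, treeCost]
  ring

end Algebra

namespace SimpleGraph

variable {V : Type*} {G : SimpleGraph V}

lemma edgeSet_fromEdgeSet_of_subset {s : Set (Sym2 V)} (hs : s ⊆ G.edgeSet) :
    (fromEdgeSet s).edgeSet = s := by
  rw [edgeSet_fromEdgeSet, sdiff_eq_left, Set.disjoint_right]
  exact fun _ hd he => G.not_isDiag_of_mem_edgeSet (hs he) hd

lemma card_edgeFinset_cycleGraph {n : ℕ} [Fintype (cycleGraph n).edgeSet] (hn : 3 ≤ n) :
    #(cycleGraph n).edgeFinset = n := by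
  obtain ⟨m, rfl⟩ : ∃ m, n = m + 3 := ⟨n - 3, by omega⟩
  have hsum := sum_degrees_eq_twice_card_edges (cycleGraph (m + 3))
  simp only [cycleGraph_degree_three_le, sum_const, card_univ, Fintype.card_fin,
    smul_eq_mul] at hsum
  simp only [edgeFinset_card, Fintype.card_eq_nat_card] at hsum ⊢
  omega

end SimpleGraph

open SimpleGraph

namespace IsSpanningTree

variable {V : Type*} [Fintype V] {G : SimpleGraph V} {T : Finset (Sym2 V)}

lemma card_add_one (hT : IsSpanningTree G T) : #T + 1 = Fintype.card V := by
  classical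
  rw [← hT.2.card_edgeFinset]
  congr
  rw [← coe_inj, coe_edgeFinset, edgeSet_fromEdgeSet_of_subset hT.1]

lemma exists_eq_erase [DecidableEq (Sym2 V)] [Fintype G.edgeSet]
    (hG : #G.edgeFinset = Fintype.card V) (hT : IsSpanningTree G T) :
    ∃ e ∈ G.edgeFinset, T = G.edgeFinset.erase e := by
  have hTE : T ⊆ G.edgeFinset := fun _ h => mem_edgeFinset.2 (hT.1 h)
  obtain ⟨e, heT, hinsert⟩ := exists_eq_insert_iff.2 ⟨hTE, hT.card_add_one.trans hG.symm⟩
  exact ⟨e, hinsert ▸ mem_insert_self e T, by rw [← hinsert, erase_insert heT]⟩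

end IsSpanningTree

theorem isLinearization_of_card_edgeFinset_eq {V : Type*} [Fintype V] [DecidableEq (Sym2 V)]
    {G : SimpleGraph V} [Fintype G.edgeSet] (hG : #G.edgeFinset = Fintype.card V)
    (Q : Sym2 V → Sym2 V → ℝ) :
    IsLinearization G Q fun e => Q e e + ∑ i ∈ G.edgeFinset.erase e, (Q i e + Q e i)
      - (∑ i ∈ G.edgeFinset, ∑ j ∈ G.edgeFinset.erase i, Q i j) / ((#G.edgeFinset : ℝ) - 1) := by
  intro T hT
  obtain ⟨e, he, rfl⟩ := hT.exists_eq_erase hG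
  exact treeCost_erase_eq_sum Q _ he

open scoped Classical in
/-- Every cost matrix of the QMSTP on a cycle is linearizable, with the explicit
linearization of Theorem 4. -/
theorem cycle_linearizable (n : ℕ) (hn : 3 ≤ n)
    (Q : Sym2 (Fin n) → Sym2 (Fin n) → ℝ) :
    IsLinearization (SimpleGraph.cycleGraph n) Q
      (fun e =>
        Q e e
          + ∑ i ∈ (SimpleGraph.cycleGraph n).edgeFinset.erase e, (Q i e + Q e i)
          - (∑ i ∈ (SimpleGraph.cycleGraph n).edgeFinset,
              ∑ j ∈ (SimpleGraph.cycleGraph n).edgeFinset.erase i, Q i j) / ((n : ℝ) - 1)) := by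
  have hcard := card_edgeFinset_cycleGraph hn
  have h := isLinearization_of_card_edgeFinset_eq (hcard.trans (Fintype.card_fin n).symm) Q
  rwa [hcard] at h
end

section
/- Let M = (m(i,j)) be an n×n matrix with m(i,j) = a_i b_j + c_i d_j, and suppose at least one of the vectors a, b, c, d is constant. Then M is a sum matrix if and only if (a is constant or b is constant) and (c is constant or d is constant). -/
/-! Sum matrices form an additive group, and a rank-one matrix `x i * y j` is a sum matrix
exactly when `x` or `y` is constant (its `2 × 2` minors `(x i - x i') * (y j - y j')` vanish).
So if, say, `a` or `b` is constant, `M` is a sum matrix iff `c i * d j` is one. -/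

open Finset

/-- A vector is constant. -/
def IsConstVec {n : ℕ} (v : Fin n → ℝ) : Prop := ∀ i j, v i = v j

/-- An `n × n` matrix is a sum matrix. -/
def IsSumMatrix {n : ℕ} (M : Fin n → Fin n → ℝ) : Prop :=
  ∃ e f : Fin n → ℝ, ∀ i j, M i j = e i + f j

theorem forall_eq_or_forall_eq_of_mul_eq_add {ι κ R : Type*} [CommRing R] [NoZeroDivisors R]
    {x e : ι → R} {y f : κ → R} (h : ∀ i j, x i * y j = e i + f j) :
    (∀ i i', x i = x i') ∨ ∀ j j', y j = y j' := by
  by_contra! hne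
  obtain ⟨⟨i, i', hx⟩, ⟨j, j', hy⟩⟩ := hne
  have hminor : (x i - x i') * (y j - y j') = 0 := by
    linear_combination h i j - h i j' - h i' j + h i' j'
  exact mul_ne_zero (sub_ne_zero.2 hx) (sub_ne_zero.2 hy) hminor

theorem IsConstVec.exists_forall_eq {n : ℕ} {v : Fin n → ℝ} (hv : IsConstVec v) :
    ∃ k, ∀ i, v i = k := by
  rcases isEmpty_or_nonempty (Fin n) with _ | ⟨⟨i₀⟩⟩
  · exact ⟨0, isEmptyElim⟩
  · exact ⟨v i₀, fun i => hv i i₀⟩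

theorem IsSumMatrix.add {n : ℕ} {A B : Fin n → Fin n → ℝ} (hA : IsSumMatrix A)
    (hB : IsSumMatrix B) : IsSumMatrix (A + B) := by
  obtain ⟨e, f, hA⟩ := hA
  obtain ⟨e', f', hB⟩ := hB
  exact ⟨e + e', f + f', fun i j => by simp only [Pi.add_apply, hA, hB]; ring⟩

theorem IsSumMatrix.sub {n : ℕ} {A B : Fin n → Fin n → ℝ} (hA : IsSumMatrix A)
    (hB : IsSumMatrix B) : IsSumMatrix (A - B) := by
  obtain ⟨e, f, hA⟩ := hA
  obtain ⟨e', f', hB⟩ := hB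
  exact ⟨e - e', f - f', fun i j => by simp only [Pi.sub_apply, hA, hB]; ring⟩

theorem isSumMatrix_add_left_iff {n : ℕ} {A B : Fin n → Fin n → ℝ} (hA : IsSumMatrix A) :
    IsSumMatrix (A + B) ↔ IsSumMatrix B :=
  ⟨fun h => by simpa using h.sub hA, hA.add⟩

theorem isSumMatrix_add_right_iff {n : ℕ} {A B : Fin n → Fin n → ℝ} (hB : IsSumMatrix B) :
    IsSumMatrix (A + B) ↔ IsSumMatrix A := by
  rw [add_comm, isSumMatrix_add_left_iff hB]

theorem isSumMatrix_mul_iff {n : ℕ} {x y : Fin n → ℝ} :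
    IsSumMatrix (fun i j => x i * y j) ↔ IsConstVec x ∨ IsConstVec y := by
  refine ⟨fun ⟨e, f, h⟩ => forall_eq_or_forall_eq_of_mul_eq_add fun i j => h i j, ?_⟩
  rintro (hx | hy)
  · obtain ⟨k, hk⟩ := hx.exists_forall_eq
    exact ⟨0, fun j => k * y j, fun i j => by simp [hk]⟩
  · obtain ⟨k, hk⟩ := hy.exists_forall_eq
    exact ⟨fun i => x i * k, 0, fun i j => by simp [hk]⟩

/-- Rank-two factored matrix with some constant factor: characterization of being
a sum matrix. -/
theorem factored_sum_matrix_const_case (n : ℕ) (M : Fin n → Fin n → ℝ)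
    (a b c d : Fin n → ℝ)
    (hM : ∀ i j, M i j = a i * b j + c i * d j)
    (hconst : IsConstVec a ∨ IsConstVec b ∨ IsConstVec c ∨ IsConstVec d) :
    IsSumMatrix M ↔ ((IsConstVec a ∨ IsConstVec b) ∧ (IsConstVec c ∨ IsConstVec d)) := by
  obtain rfl : M = (fun i j => a i * b j) + fun i j => c i * d j := funext₂ hM
  have hsplit : (IsConstVec a ∨ IsConstVec b) ∨ (IsConstVec c ∨ IsConstVec d) := by tauto
  rcases hsplit with hab | hcd
  · rw [isSumMatrix_add_left_iff (isSumMatrix_mul_iff.2 hab), isSumMatrix_mul_iff]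
    exact ⟨fun hcd => ⟨hab, hcd⟩, And.right⟩
  · rw [isSumMatrix_add_right_iff (isSumMatrix_mul_iff.2 hcd), isSumMatrix_mul_iff]
    exact ⟨fun hab => ⟨hab, hcd⟩, And.left⟩
end

section
/- Let M = (m(i,j)) be an n×n matrix with m(i,j) = a_i b_j + c_i d_j, where none of the vectors a, b, c, d is constant. Then M is a sum matrix if and only if there exist constants K ≠ 0, K₁, K₂ such that a_i = K c_i + K₁ and d_i = −K b_i + K₂ for all i = 1,...,n. -/
open Finset

/-!
A sum matrix has vanishing mixed second differences `M i j + M i' j' - M i j' - M i' j`.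
For `m(i,j) = a_i b_j + c_i d_j` these are `Δa ⊗ Δb + Δc ⊗ Δd`; fixing a pair of rows on which
`c` differs and a pair of columns on which `b` differs forces `Δa = K Δc` and `Δd = -K Δb` for one
scalar `K`, which is nonzero because `a` is not constant. Conversely, under these relations
`m(i,j) = K₂ c_i + K₁ b_j`.
-/

theorem IsSumMatrix.add_add_eq {n : ℕ} {M : Fin n → Fin n → ℝ} (hM : IsSumMatrix M)
    (i i' j j' : Fin n) : M i j + M i' j' = M i j' + M i' j := by
  obtain ⟨e, f, hef⟩ := hM
  rw [hef, hef, hef, hef]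
  ring

theorem exists_sub_eq_mul_sub_of_mul_sub_add_mul_sub_eq_zero {ι κ 𝕜 : Type*} [Field 𝕜]
    {a c : ι → 𝕜} {b d : κ → 𝕜}
    (h : ∀ i i' j j', (a i - a i') * (b j - b j') + (c i - c i') * (d j - d j') = 0)
    {j₀ j₁ : κ} (hb : b j₀ ≠ b j₁) {i₀ i₁ : ι} (hc : c i₀ ≠ c i₁) :
    ∃ K : 𝕜, (∀ i i', a i - a i' = K * (c i - c i')) ∧
      ∀ j j', d j - d j' = -K * (b j - b j') := by
  have hb' : b j₀ - b j₁ ≠ 0 := sub_ne_zero.mpr hb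
  have hc' : c i₀ - c i₁ ≠ 0 := sub_ne_zero.mpr hc
  set K := (d j₁ - d j₀) / (b j₀ - b j₁) with hK
  have hac : ∀ i i', a i - a i' = K * (c i - c i') := fun i i' => by
    rw [hK]
    field_simp
    linear_combination h i i' j₀ j₁
  refine ⟨K, hac, fun j j' => ?_⟩
  have hprod : (c i₀ - c i₁) * (d j - d j' + K * (b j - b j')) = 0 := by
    linear_combination h i₀ i₁ j j' - (b j - b j') * hac i₀ i₁
  linear_combination (mul_eq_zero.mp hprod).resolve_left hc'

theorem exists_eq_mul_add_of_sub_eq_mul_sub {ι R : Type*} [CommRing R] [Nonempty ι]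
    {x y : ι → R} {K : R} (h : ∀ i i', x i - x i' = K * (y i - y i')) :
    ∃ C : R, ∀ i, x i = K * y i + C := by
  obtain ⟨i₀⟩ := ‹Nonempty ι›
  exact ⟨x i₀ - K * y i₀, fun i => by linear_combination h i i₀⟩

theorem factored_sum_matrix_nonconst_case_general (n : ℕ) (M : Fin n → Fin n → ℝ)
    (a b c d : Fin n → ℝ)
    (hM : ∀ i j, M i j = a i * b j + c i * d j)
    (ha : ¬ IsConstVec a) (hb : ¬ IsConstVec b) (hc : ¬ IsConstVec c) :
    IsSumMatrix M ↔
      ∃ K K1 K2 : ℝ, K ≠ 0 ∧ ∀ i, a i = K * c i + K1 ∧ d i = -K * b i + K2 := by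
  constructor
  · intro hsum
    have hmixed : ∀ i i' j j',
        (a i - a i') * (b j - b j') + (c i - c i') * (d j - d j') = 0 := fun i i' j j' => by
      have := hsum.add_add_eq i i' j j'
      simp only [hM] at this
      linear_combination this
    obtain ⟨j₀, j₁, hb⟩ : ∃ j j', b j ≠ b j' := by simpa [IsConstVec] using hb
    obtain ⟨i₀, i₁, hc⟩ : ∃ i i', c i ≠ c i' := by simpa [IsConstVec] using hc
    obtain ⟨K, hac, hdb⟩ := exists_sub_eq_mul_sub_of_mul_sub_add_mul_sub_eq_zero hmixed hb hc
    have : Nonempty (Fin n) := ⟨i₀⟩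
    obtain ⟨K1, hK1⟩ := exists_eq_mul_add_of_sub_eq_mul_sub hac
    obtain ⟨K2, hK2⟩ := exists_eq_mul_add_of_sub_eq_mul_sub hdb
    refine ⟨K, K1, K2, ?_, fun i => ⟨hK1 i, hK2 i⟩⟩
    rintro rfl
    exact ha fun i i' => by simpa [sub_eq_zero] using hac i i'
  · rintro ⟨K, K1, K2, -, h⟩
    refine ⟨fun i => K2 * c i, fun j => K1 * b j, fun i j => ?_⟩
    rw [hM, (h i).1, (h j).2]
    ring

/-- Rank-two factored matrix with no constant factor: characterization of being
a sum matrix. -/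
theorem factored_sum_matrix_nonconst_case (n : ℕ) (M : Fin n → Fin n → ℝ)
    (a b c d : Fin n → ℝ)
    (hM : ∀ i j, M i j = a i * b j + c i * d j)
    (ha : ¬ IsConstVec a) (hb : ¬ IsConstVec b) (hc : ¬ IsConstVec c)
    (hd : ¬ IsConstVec d) :
    IsSumMatrix M ↔
      ∃ K K1 K2 : ℝ, K ≠ 0 ∧ ∀ i, a i = K * c i + K1 ∧ d i = -K * b i + K2 :=
  factored_sum_matrix_nonconst_case_general n M a b c d hM ha hb hc
end

section
/- If m(i,j) = a_i b_j + c_i d_j defines a sum matrix and neither b nor d is a constant vector, then for all i, j: a_i = a_j if and only if c_i = c_j. -/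
open Finset

/-!
Mixed second differences `M i k - M j k - (M i l - M j l)` of a sum matrix vanish. For
`M = a bᵀ + c dᵀ` this difference is `(a i - a j) (b k - b l) + (c i - c j) (d k - d l)`, so if one
of `a i - a j`, `c i - c j` is zero, evaluating at a pair `k, l` on which the other vector is
nonconstant shows that the other one is zero too.
-/

theorem IsSumMatrix.mixed_difference_eq_zero {n : ℕ} {M : Fin n → Fin n → ℝ}
    (hM : IsSumMatrix M) (i j k l : Fin n) : M i k - M j k - (M i l - M j l) = 0 := by
  obtain ⟨e, f, hef⟩ := hM
  rw [hef, hef, hef, hef]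
  ring

theorem eq_zero_of_forall_mul_sub_eq_zero {n : ℕ} {x : ℝ} {v : Fin n → ℝ}
    (hv : ¬ IsConstVec v) (h : ∀ k l, x * (v k - v l) = 0) : x = 0 := by
  obtain ⟨k, l, hkl⟩ : ∃ k l, v k ≠ v l := by simpa [IsConstVec] using hv
  exact (mul_eq_zero.mp (h k l)).resolve_right (sub_ne_zero.mpr hkl)

theorem eq_zero_iff_eq_zero_of_forall_mul_sub_add_mul_sub_eq_zero {n : ℕ} {x y : ℝ}
    {v w : Fin n → ℝ} (hv : ¬ IsConstVec v) (hw : ¬ IsConstVec w)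
    (h : ∀ k l, x * (v k - v l) + y * (w k - w l) = 0) : x = 0 ↔ y = 0 := by
  constructor
  · rintro rfl
    exact eq_zero_of_forall_mul_sub_eq_zero hw fun k l => by simpa using h k l
  · rintro rfl
    exact eq_zero_of_forall_mul_sub_eq_zero hv fun k l => by simpa using h k l

/-- If a factored matrix is a sum matrix and neither `b` nor `d` is constant,
then `a i = a j ↔ c i = c j`. -/
theorem factored_sum_matrix_equal_entries (n : ℕ) (M : Fin n → Fin n → ℝ)
    (a b c d : Fin n → ℝ)
    (hM : ∀ i j, M i j = a i * b j + c i * d j)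
    (hsum : IsSumMatrix M)
    (hb : ¬ IsConstVec b) (hd : ¬ IsConstVec d) :
    ∀ i j, a i = a j ↔ c i = c j := by
  intro i j
  have hmixed : ∀ k l, (a i - a j) * (b k - b l) + (c i - c j) * (d k - d l) = 0 := by
    intro k l
    have h := hsum.mixed_difference_eq_zero i j k l
    rw [hM, hM, hM, hM] at h
    linear_combination h
  rw [← sub_eq_zero, ← sub_eq_zero (a := c i)]
  exact eq_zero_iff_eq_zero_of_forall_mul_sub_add_mul_sub_eq_zero hb hd hmixed
end

section
/- The multiplicative minimum spanning tree problem is NP-hard even when all edge weights d¹_e, d²_e are nonnegative: deciding whether a graph G with nonnegative edge weights d¹, d² and constants δ₁, δ₂ admits a spanning tree T with (Σ_{e∈T} d¹_e + δ₁)(Σ_{e∈T} d²_e + δ₂) ≤ 0 is NP-hard, via reduction from the subset sum problem. -/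
/-!
For `d¹ = d² = d` with `d = a i` on the edge `{(i,0),(i,1)}` of the `i`-th triangle and
`0` elsewhere, and `δ₁ = δ₂ = -K`, the objective is the square `(d(T) - K)²`. It is `≤ 0` exactly
when `d(T) = K`, and `d(T)` is the sum of the `a i` whose edge lies in `T`. Conversely every `S`
is realised by a spanning tree: join the apices `(i,0)` in a path and, in each triangle, attach
`(i,1)` to `(i,0)` when `i ∈ S` and to `(i,2)` otherwise. This is a tree because the edges
`{v, p v}`, `v ≠ r`, of a parent map `p` that strictly decreases a rank away from the root `r`
connect every vertex to `r` and number `|V| - 1`.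
-/

open Finset

theorem Finset.sum_sum_ite_eq_sum_filter_mem {ι α M : Type*} [AddCommMonoid M] [DecidableEq α]
    (T : Finset α) (s : Finset ι) (g : ι → α) (a : ι → M) :
    ∑ e ∈ T, ∑ i ∈ s, (if e = g i then a i else 0) = ∑ i ∈ s with g i ∈ T, a i := by
  rw [sum_comm, sum_filter]
  exact sum_congr rfl fun i _ ↦ sum_ite_eq' T (g i) fun _ ↦ a i

namespace SimpleGraph

variable {V : Type*} [Fintype V] [DecidableEq V]

def parentEdges (r : V) (p : V → V) : Finset (Sym2 V) :=
  (univ.erase r).image fun v ↦ s(v, p v)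

variable {r : V} {p : V → V} {f : V → ℕ}

theorem mem_parentEdges {e : Sym2 V} :
    e ∈ parentEdges r p ↔ ∃ v ≠ r, s(v, p v) = e := by
  simp [parentEdges]

theorem fromEdgeSet_parentEdges_adj (hp : ∀ v ≠ r, f (p v) < f v) {v : V} (hv : v ≠ r) :
    (fromEdgeSet (parentEdges r p : Set (Sym2 V))).Adj v (p v) :=
  (fromEdgeSet_adj _).2
    ⟨mem_parentEdges.2 ⟨v, hv, rfl⟩, fun h ↦ (hp v hv).ne (by rw [← h])⟩

theorem fromEdgeSet_parentEdges_reachable (hp : ∀ v ≠ r, f (p v) < f v) (v : V) :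
    (fromEdgeSet (parentEdges r p : Set (Sym2 V))).Reachable v r := by
  induction hk : f v using Nat.strong_induction_on generalizing v with
  | _ k ih =>
    by_cases hv : v = r
    · exact hv ▸ .rfl
    · exact (fromEdgeSet_parentEdges_adj hp hv).reachable.trans (ih _ (hk ▸ hp v hv) _ rfl)

theorem card_parentEdges_add_one (hp : ∀ v ≠ r, f (p v) < f v) :
    #(parentEdges r p) + 1 = Fintype.card V := by
  have hinj : Set.InjOn (fun v ↦ s(v, p v)) (univ.erase r : Finset V) := by
    intro v hv w hw hvw
    rcases Sym2.eq_iff.1 hvw with ⟨h, -⟩ | ⟨hvpw, hpvw⟩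
    · exact h
    · have hv' := hp v (mem_erase.1 hv).1
      have hw' := hp w (mem_erase.1 hw).1
      rw [hpvw] at hv'
      rw [← hvpw] at hw'
      omega
  rw [parentEdges, card_image_of_injOn hinj, card_erase_of_mem (mem_univ r), card_univ]
  have : 0 < Fintype.card V := Fintype.card_pos_iff.2 ⟨r⟩
  omega

theorem edgeSet_fromEdgeSet_parentEdges (hp : ∀ v ≠ r, f (p v) < f v) :
    (fromEdgeSet (parentEdges r p : Set (Sym2 V))).edgeSet = parentEdges r p := by
  rw [edgeSet_fromEdgeSet, sdiff_eq_left, Set.disjoint_left]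
  rintro _ he hdiag
  obtain ⟨v, hv, rfl⟩ := mem_parentEdges.1 he
  rw [Sym2.mem_diagSet, Sym2.mk_isDiag_iff] at hdiag
  exact (hp v hv).ne (by rw [← hdiag])

theorem isTree_fromEdgeSet_parentEdges (hp : ∀ v ≠ r, f (p v) < f v) :
    (fromEdgeSet (parentEdges r p : Set (Sym2 V))).IsTree := by
  have : Nonempty V := ⟨r⟩
  refine isTree_iff_connected_and_card.2 ⟨⟨fun u v ↦ ?_⟩, ?_⟩
  · exact (fromEdgeSet_parentEdges_reachable hp u).trans
      (fromEdgeSet_parentEdges_reachable hp v).symm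
  · rw [edgeSet_fromEdgeSet_parentEdges hp, Nat.card_coe_set_eq, Set.ncard_coe_finset,
      Nat.card_eq_fintype_card, card_parentEdges_add_one hp]

end SimpleGraph

theorem isSpanningTree_parentEdges {V : Type*} [Fintype V] [DecidableEq V] {G : SimpleGraph V}
    {r : V} {p : V → V} {f : V → ℕ} (hG : ∀ v ≠ r, G.Adj v (p v))
    (hp : ∀ v ≠ r, f (p v) < f v) : IsSpanningTree G (SimpleGraph.parentEdges r p) := by
  refine ⟨fun e he ↦ ?_, SimpleGraph.isTree_fromEdgeSet_parentEdges hp⟩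
  obtain ⟨v, hv, rfl⟩ := SimpleGraph.mem_parentEdges.1 he
  exact hG v hv

def linkedTriangles (n : ℕ) : SimpleGraph (Fin n × Fin 3) :=
  SimpleGraph.fromRel fun p q ↦ p.1 = q.1 ∨ (p.2 = 0 ∧ q.2 = 0 ∧ (q.1 : ℕ) = p.1 + 1)

def triangleParent {n : ℕ} (S : Finset (Fin n)) : Fin n × Fin 3 → Fin n × Fin 3
  | (i, 0) => (⟨(i : ℕ) - 1, (Nat.sub_le _ _).trans_lt i.isLt⟩, 0)
  | (i, 1) => if i ∈ S then (i, 0) else (i, 2)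
  | (i, 2) => (i, 0)

def triangleRank {n : ℕ} : Fin n × Fin 3 → ℕ
  | (i, 0) => 3 * i
  | (i, 1) => 3 * i + 2
  | (i, 2) => 3 * i + 1

section

variable {n : ℕ} (hn : 0 < n) (S : Finset (Fin n))

theorem triangleRank_triangleParent_lt :
    ∀ v ≠ (⟨0, hn⟩, 0), triangleRank (triangleParent S v) < triangleRank v := by
  rintro ⟨i, j⟩ hv
  fin_cases j
  · have : (i : ℕ) ≠ 0 := fun h ↦ hv (by ext <;> simp [h])
    simp only [triangleParent, triangleRank]
    omega
  · by_cases hi : i ∈ S <;> simp [triangleParent, triangleRank, hi]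
  · simp [triangleParent, triangleRank]

theorem linkedTriangles_adj_triangleParent :
    ∀ v ≠ (⟨0, hn⟩, 0), (linkedTriangles n).Adj v (triangleParent S v) := by
  intro v hv
  refine (SimpleGraph.fromRel_adj _ _ _).2
    ⟨fun h ↦ (triangleRank_triangleParent_lt hn S v hv).ne (by rw [← h]), ?_⟩
  obtain ⟨i, j⟩ := v
  fin_cases j
  · have : (i : ℕ) ≠ 0 := fun h ↦ hv (by ext <;> simp [h])
    simp [triangleParent]
    omega
  · by_cases hi : i ∈ S <;> simp [triangleParent, hi]
  · simp [triangleParent]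

theorem filter_mem_parentEdges_triangleParent :
    univ.filter (fun i ↦
      s((i, 0), (i, 1)) ∈ SimpleGraph.parentEdges (⟨0, hn⟩, 0) (triangleParent S)) = S := by
  ext i
  rw [mem_filter_univ, SimpleGraph.mem_parentEdges]
  constructor
  · rintro ⟨v, -, hv⟩
    rcases Sym2.eq_iff.1 hv with ⟨rfl, h⟩ | ⟨rfl, h⟩
    · simp [triangleParent] at h
    · by_contra hi
      simp [triangleParent, hi] at h
  · intro hi
    exact ⟨(i, 1), by simp, by simp [triangleParent, hi, Sym2.eq_swap]⟩

end

theorem mmstp_subset_sum_reduction_general (n : ℕ) (hn : 0 < n)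
    (a : Fin n → ℝ) (K : ℝ) :
    (∃ S : Finset (Fin n), ∑ i ∈ S, a i = K) ↔
      ∃ T : Finset (Sym2 (Fin n × Fin 3)),
        IsSpanningTree
          (SimpleGraph.fromRel (fun p q : Fin n × Fin 3 =>
            p.1 = q.1 ∨ (p.2 = 0 ∧ q.2 = 0 ∧ (q.1 : ℕ) = (p.1 : ℕ) + 1))) T ∧
        ((∑ e ∈ T, ∑ i : Fin n,
            if e = s((i, (0 : Fin 3)), (i, (1 : Fin 3))) then a i else 0) + (-K)) *
          ((∑ e ∈ T, ∑ i : Fin n,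
            if e = s((i, (0 : Fin 3)), (i, (1 : Fin 3))) then a i else 0) + (-K)) ≤ 0 := by
  simp_rw [sum_sum_ite_eq_sum_filter_mem]
  constructor
  · rintro ⟨S, rfl⟩
    refine ⟨_, isSpanningTree_parentEdges (linkedTriangles_adj_triangleParent hn S)
      (triangleRank_triangleParent_lt hn S), ?_⟩
    rw [filter_mem_parentEdges_triangleParent, add_neg_cancel, mul_zero]
  · rintro ⟨T, -, hT⟩
    exact ⟨_, add_neg_eq_zero.1 (mul_self_eq_zero.1 (le_antisymm hT (mul_self_nonneg _)))⟩

/-- Correctness of the reduction from subset sum to the multiplicative minimum spanning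
tree problem with nonnegative weights `d¹ = d² = d` and `δ₁ = δ₂ = -K`: the constructed
instance (linked triangles) has a spanning tree of objective value `≤ 0` iff the subset
sum instance has a solution. -/
theorem mmstp_subset_sum_reduction (n : ℕ) (hn : 0 < n)
    (a : Fin n → ℝ) (ha : ∀ i, 0 ≤ a i) (K : ℝ) :
    (∃ S : Finset (Fin n), ∑ i ∈ S, a i = K) ↔
      ∃ T : Finset (Sym2 (Fin n × Fin 3)),
        IsSpanningTree
          (SimpleGraph.fromRel (fun p q : Fin n × Fin 3 =>
            p.1 = q.1 ∨ (p.2 = 0 ∧ q.2 = 0 ∧ (q.1 : ℕ) = (p.1 : ℕ) + 1))) T ∧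
        ((∑ e ∈ T, ∑ i : Fin n,
            if e = s((i, (0 : Fin 3)), (i, (1 : Fin 3))) then a i else 0) + (-K)) *
          ((∑ e ∈ T, ∑ i : Fin n,
            if e = s((i, (0 : Fin 3)), (i, (1 : Fin 3))) then a i else 0) + (-K)) ≤ 0 :=
  mmstp_subset_sum_reduction_general n hn a K
end

section
/- Let Q be a linearizable symmetric cost matrix for the QMSTP on a simple graph G with n vertices, and let a, b, x, y be four distinct edges admitting an {a,b}-{x,y}-backbone B (a set of n−3 edges such that B ∪ {e,f} is a spanning tree for every e ∈ {a,b}, f ∈ {x,y}). Then q(b,x) − q(a,x) = q(b,y) − q(a,y). -/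
/-! For a backbone tree `T = B ∪ {e, f}` (the cardinality of `B` forces `e, f ∉ B`), expanding
`Q(T) = c(T)` leaves `2 q(e,f)` as the only term coupling `e` and `f`: it equals a potential of
`e` plus a potential of `f` plus a constant depending on `B` alone. A function of this separable
form on `{a,b} × {x,y}` has vanishing mixed difference. -/

open Finset

lemma IsSpanningTree.card_add_one_s16 {V : Type*} [Fintype V] {G : SimpleGraph V}
    {T : Finset (Sym2 V)} (hT : IsSpanningTree G T) : #T + 1 = Fintype.card V := by
  have hE : (SimpleGraph.fromEdgeSet (T : Set (Sym2 V))).edgeSet = T := by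
    rw [SimpleGraph.edgeSet_fromEdgeSet, sdiff_eq_left]
    exact Set.subset_compl_iff_disjoint_right.mp (hT.1.trans G.edgeSet_subset_compl_diagSet)
  have := (SimpleGraph.isTree_iff_connected_and_card.mp hT.2).2
  rwa [hE, Nat.card_coe_set_eq, Set.ncard_coe_finset, Nat.card_eq_fintype_card] at this

lemma Finset.notMem_of_card_insert_insert {α : Type*} [DecidableEq α] {e f : α}
    {s : Finset α} (h : #(insert e (insert f s)) = #s + 2) : e ∉ insert f s ∧ f ∉ s := by
  have hf : #(insert f s) ≤ #s + 1 := card_insert_le f s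
  refine ⟨fun he => ?_, fun hf' => ?_⟩
  · rw [insert_eq_of_mem he] at h
    omega
  · have := card_insert_le e (insert f s)
    rw [insert_eq_of_mem hf'] at h this
    omega

lemma treeCost_insert {V : Type*} [DecidableEq V] {Q : Sym2 V → Sym2 V → ℝ}
    (hQ : ∀ e f, Q e f = Q f e) {e : Sym2 V} {S : Finset (Sym2 V)} (he : e ∉ S) :
    treeCost Q (insert e S) = Q e e + 2 * ∑ g ∈ S, Q e g + treeCost Q S := by
  have hcol : ∑ g ∈ S, Q g e = ∑ g ∈ S, Q e g := sum_congr rfl fun g _ => hQ g e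
  simp only [treeCost, sum_insert he, sum_add_distrib, hcol]
  ring

noncomputable def backbonePotential {V : Type*} (Q : Sym2 V → Sym2 V → ℝ) (c : Sym2 V → ℝ)
    (B : Finset (Sym2 V)) (e : Sym2 V) : ℝ :=
  c e - Q e e - 2 * ∑ g ∈ B, Q e g

lemma IsLinearization.two_mul_eq_backbonePotential_add {V : Type*} [Fintype V] [DecidableEq V]
    {G : SimpleGraph V} {Q : Sym2 V → Sym2 V → ℝ} {c : Sym2 V → ℝ} (hc : IsLinearization G Q c)
    (hQ : ∀ e f, Q e f = Q f e) {B : Finset (Sym2 V)} (hB : #B = Fintype.card V - 3)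
    {e f : Sym2 V} (hef : e ≠ f) (hT : IsSpanningTree G (insert e (insert f B))) :
    2 * Q e f = backbonePotential Q c B e + backbonePotential Q c B f
      + (∑ g ∈ B, c g - treeCost Q B) := by
  have hTcard := hT.card_add_one_s16
  have hpair : 2 ≤ #(insert e (insert f B)) := (card_pair hef).ge.trans <|
    card_le_card <| insert_subset_insert e <| singleton_subset_iff.mpr <| mem_insert_self f B
  obtain ⟨he, hf⟩ := notMem_of_card_insert_insert (s := B) (e := e) (f := f) (by omega)
  have hcost := hc _ hT
  rw [treeCost_insert hQ he, treeCost_insert hQ hf, sum_insert he, sum_insert hf,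
    sum_insert hf] at hcost
  unfold backbonePotential
  linarith

theorem backbone_difference_general {V : Type*} [Fintype V] [DecidableEq V] (G : SimpleGraph V)
    (Q : Sym2 V → Sym2 V → ℝ) (hsymm : ∀ e f, Q e f = Q f e)
    (hlin : Linearizable G Q)
    (a b x y : Sym2 V)
    (hdist : [a, b, x, y].Pairwise (· ≠ ·))
    (B : Finset (Sym2 V)) (hcard : B.card = Fintype.card V - 3)
    (hback : ∀ e ∈ ({a, b} : Set (Sym2 V)), ∀ f ∈ ({x, y} : Set (Sym2 V)),
      IsSpanningTree G (insert e (insert f B))) :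
    Q b x - Q a x = Q b y - Q a y := by
  obtain ⟨c, hc⟩ := hlin
  simp only [List.pairwise_cons, List.mem_cons, List.not_mem_nil, or_false, forall_eq_or_imp,
    forall_eq] at hdist
  have key {e f} (he : e ∈ ({a, b} : Set (Sym2 V))) (hf : f ∈ ({x, y} : Set (Sym2 V)))
      (hef : e ≠ f) := hc.two_mul_eq_backbonePotential_add hsymm hcard hef (hback e he f hf)
  have hax := key (by simp) (by simp) hdist.1.2.1
  have hay := key (by simp) (by simp) hdist.1.2.2
  have hbx := key (by simp) (by simp) hdist.2.1.1
  have hby := key (by simp) (by simp) hdist.2.1.2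
  linarith

/-- Backbone lemma: if `Q` is a linearizable symmetric cost matrix and `B` is an
`{a,b}`-`{x,y}`-backbone, then `q(b,x) - q(a,x) = q(b,y) - q(a,y)`. -/
theorem backbone_difference {V : Type*} [Fintype V] [DecidableEq V] (G : SimpleGraph V)
    (Q : Sym2 V → Sym2 V → ℝ) (hsymm : ∀ e f, Q e f = Q f e)
    (hlin : Linearizable G Q)
    (a b x y : Sym2 V)
    (ha : a ∈ G.edgeSet) (hb : b ∈ G.edgeSet) (hx : x ∈ G.edgeSet) (hy : y ∈ G.edgeSet)
    (hdist : [a, b, x, y].Pairwise (· ≠ ·))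
    (B : Finset (Sym2 V)) (hcard : B.card = Fintype.card V - 3)
    (hback : ∀ e ∈ ({a, b} : Set (Sym2 V)), ∀ f ∈ ({x, y} : Set (Sym2 V)),
      IsSpanningTree G (insert e (insert f B))) :
    Q b x - Q a x = Q b y - Q a y :=
  backbone_difference_general G Q hsymm hlin a b x y hdist B hcard hback
end
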